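/- arXiv:2409.14854 — 11 statements merged into one kernel-verified Lean document; each statement's English description precedes it below -/
import Mathlib

section
/- Let G be a valued group and let f, g ∈ G with f ≺ g. Then ⁅f,g⁆ ≺ g, where ⁅f,g⁆ := f⁻¹*g⁻¹*f*g. (Consequently, whenever f and g are not ≍-equivalent, the commutator ⁅f,g⁆ is strictly smaller than the maximum of f and g for ⪯.) -/
variable {G : Type*} [Group G]

/-- `f ≺ g` : strict part of the dominance relation. -/
def vlt (le : G → G → Prop) (f g : G) : Prop := le f g ∧ ¬ le g f

/-- `f ≍ g` : equivalence induced by the dominance relation. -/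
def veq (le : G → G → Prop) (f g : G) : Prop := le f g ∧ le g f

/-- A dominance relation on a group `G`, making it a valued group:
a reflexive, transitive, total relation satisfying D1-D4. -/
structure IsValuation (le : G → G → Prop) : Prop where
  refl : ∀ f : G, le f f
  trans : ∀ f g h : G, le f g → le g h → le f h
  total : ∀ f g : G, le f g ∨ le g f
  d1 : ∀ f : G, f ≠ 1 → vlt le 1 f
  d2 : ∀ f g : G, le (f * g) f ∨ le (f * g) g
  d3 : ∀ f g h : G, le f g → le (h * f * h⁻¹) (h * g * h⁻¹)
  d4 : ∀ f : G, veq le f f⁻¹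

/- The commutator `f⁻¹ * g⁻¹ * f * g` is the product of `f⁻¹` and the conjugate `g⁻¹ * f * g`.
Both factors are `≺ g`: the first because `f⁻¹ ≍ f`, the second because conjugation by `g⁻¹`
preserves `⪯` in both directions and fixes `g`. By (D2) the product is `⪯` one of the factors. -/

namespace IsValuation

variable {le : G → G → Prop} (hv : IsValuation le)
include hv

theorem vlt_of_le_of_vlt {a b c : G} (hab : le a b) (hbc : vlt le b c) : vlt le a c :=
  ⟨hv.trans _ _ _ hab hbc.1, fun hca => hbc.2 (hv.trans _ _ _ hca hab)⟩

theorem inv_vlt {a b : G} (hab : vlt le a b) : vlt le a⁻¹ b :=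
  hv.vlt_of_le_of_vlt (hv.d4 a).2 hab

theorem conj_le_conj_iff (h : G) {a b : G} : le (h * a * h⁻¹) (h * b * h⁻¹) ↔ le a b := by
  refine ⟨fun hab => ?_, hv.d3 a b h⟩
  simpa [mul_assoc] using hv.d3 _ _ h⁻¹ hab

theorem conj_vlt_conj_iff (h : G) {a b : G} : vlt le (h * a * h⁻¹) (h * b * h⁻¹) ↔ vlt le a b := by
  simp only [vlt, hv.conj_le_conj_iff]

theorem mul_vlt {a b c : G} (hac : vlt le a c) (hbc : vlt le b c) : vlt le (a * b) c :=
  (hv.d2 a b).elim (hv.vlt_of_le_of_vlt · hac) (hv.vlt_of_le_of_vlt · hbc)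

end IsValuation

/-- If `f ≺ g` then the commutator `⁅f,g⁆ = f⁻¹*g⁻¹*f*g` satisfies `⁅f,g⁆ ≺ g`. -/
theorem commutator_vlt_of_vlt (le : G → G → Prop) (hv : IsValuation le)
    (f g : G) (h : vlt le f g) :
    vlt le (f⁻¹ * g⁻¹ * f * g) g := by
  have hconj : vlt le (g⁻¹ * f * g) g := by
    simpa using (hv.conj_vlt_conj_iff g⁻¹).2 h
  have hcomm : f⁻¹ * g⁻¹ * f * g = f⁻¹ * (g⁻¹ * f * g) := by group
  rw [hcomm]
  exact hv.mul_vlt (hv.inv_vlt h) hconj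
end

section
/- Let G be a c-valued group. For every f ∈ G with f ≠ 1, the centralizer C(f) = {g ∈ G : f*g = g*f} is an Abelian subgroup of G. -/
variable {G : Type*} [Group G]

/-- A c-dominance relation: a dominance relation moreover satisfying D5 and D6. -/
structure IsCValuation (le : G → G → Prop) extends IsValuation le : Prop where
  d5 : ∀ f g : G, f ≠ 1 → g ≠ 1 → f * g = g * f → veq le f g
  d6 : ∀ f g : G, f ≠ 1 → g ≠ 1 → veq le f g → vlt le (f⁻¹ * g⁻¹ * f * g) f

/-
Two elements commuting with a fixed `f ≠ 1` are, by D5, both equivalent to `f`; so is their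
commutator, which again commutes with `f`. If that commutator were nontrivial, D6 would make it
strictly smaller than the elements themselves, a contradiction.
-/

theorem inv_mul_inv_mul_mul_eq_one_iff {g h : G} : g⁻¹ * h⁻¹ * g * h = 1 ↔ Commute g h := by
  rw [mul_assoc, mul_assoc, inv_mul_eq_one, eq_inv_mul_iff_mul_eq, eq_comm]
  rfl

theorem Commute.inv_mul_inv_mul_mul_right {f g h : G} (hg : Commute f g) (hh : Commute f h) :
    Commute f (g⁻¹ * h⁻¹ * g * h) :=
  ((hg.inv_right.mul_right hh.inv_right).mul_right hg).mul_right hh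

namespace IsValuation

variable {le : G → G → Prop}

theorem veq_of_veq_of_veq (hv : IsValuation le) {f g h : G} (hf : veq le f h) (hg : veq le g h) :
    veq le f g :=
  ⟨hv.trans _ _ _ hf.1 hg.2, hv.trans _ _ _ hg.1 hf.2⟩

end IsValuation

namespace IsCValuation

variable {le : G → G → Prop}

theorem veq_of_commute (hv : IsCValuation le) {f g : G} (hf : f ≠ 1) (hg : g ≠ 1)
    (hfg : Commute f g) : veq le g f :=
  hv.d5 g f hg hf hfg.symm

theorem not_veq_commutator (hv : IsCValuation le) {g h : G} (hg : g ≠ 1) (hh : h ≠ 1)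
    (hgh : veq le g h) : ¬ veq le (g⁻¹ * h⁻¹ * g * h) g :=
  fun hc => (hv.d6 g h hg hh hgh).2 hc.2

end IsCValuation

/-- Proposition 2.12: in a c-valued group, the centralizer of any `f ≠ 1` is Abelian. -/
theorem centralizer_abelian (le : G → G → Prop) (hv : IsCValuation le)
    (f : G) (hf : f ≠ 1) :
    ∀ g h : G, f * g = g * f → f * h = h * f → g * h = h * g := by
  intro g h hg hh
  by_contra hgh
  have hg1 : g ≠ 1 := by rintro rfl; exact hgh (by group)
  have hh1 : h ≠ 1 := by rintro rfl; exact hgh (by group)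
  have hc1 : g⁻¹ * h⁻¹ * g * h ≠ 1 := fun hc => hgh (inv_mul_inv_mul_mul_eq_one_iff.mp hc)
  have hgf := hv.veq_of_commute hf hg1 hg
  have hhf := hv.veq_of_commute hf hh1 hh
  have hcf := hv.veq_of_commute hf hc1 (Commute.inv_mul_inv_mul_mul_right hg hh)
  exact hv.not_veq_commutator hg1 hh1 (hv.veq_of_veq_of_veq hgf hhf)
    (hv.veq_of_veq_of_veq hcf hgf)
end

section
/- If a nilpotent group G admits a binary relation ⪯ making it a c-valued group, then G is commutative. (Equivalently: no non-Abelian nilpotent group can be c-valued.) -/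
variable {G : Type*} [Group G]

/-- Key lemma: in a c-valued group, if the commutator of `f` and `g` commutes with
both `f` and `g`, then it is trivial. -/
theorem comm_eq_one_of_central (le : G → G → Prop) (hv : IsCValuation le) (f g : G)
    (hcf : (f⁻¹ * g⁻¹ * f * g) * f = f * (f⁻¹ * g⁻¹ * f * g))
    (hcg : (f⁻¹ * g⁻¹ * f * g) * g = g * (f⁻¹ * g⁻¹ * f * g)) :
    f⁻¹ * g⁻¹ * f * g = 1 := by
  by_contra hc
  set c := f⁻¹ * g⁻¹ * f * g with hcdef
  have hf : f ≠ 1 := by rintro rfl; simp [hcdef] at hc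
  have hg : g ≠ 1 := by rintro rfl; simp [hcdef] at hc
  have hcfeq : veq le c f := hv.d5 c f hc hf hcf
  have hcgeq : veq le c g := hv.d5 c g hc hg hcg
  have hfg : veq le f g := ⟨hv.trans _ _ _ hcfeq.2 hcgeq.1, hv.trans _ _ _ hcgeq.2 hcfeq.1⟩
  have h6 := hv.d6 f g hf hg hfg
  exact h6.2 hcfeq.2

/-- Corollary 2.13: no non-Abelian nilpotent group can be c-valued; equivalently,
a nilpotent group admitting a c-dominance relation is commutative. -/
theorem comm_of_nilpotent_cvalued [Group.IsNilpotent G]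
    (le : G → G → Prop) (hv : IsCValuation le) :
    ∀ a b : G, a * b = b * a := by
  by_contra h
  push_neg at h
  -- G is not abelian, so the center is proper
  have hZ : Subgroup.center G ≠ ⊤ := by
    intro htop
    obtain ⟨a, b, hab⟩ := h
    exact hab ((Subgroup.mem_center_iff.mp (htop ▸ Subgroup.mem_top a)) b).symm
  -- Z_2 ≤ Z_1 would force all Z_n ≤ center, contradicting nilpotency
  have hstep : ¬ Subgroup.upperCentralSeries G 2 ≤ Subgroup.center G := by
    intro hle
    have hall : ∀ n, Subgroup.upperCentralSeries G n ≤ Subgroup.center G := by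
      intro n
      induction n with
      | zero => simp
      | succ n ih =>
        intro x hx
        rw [mem_upperCentralSeries_succ_iff] at hx
        have : x ∈ Subgroup.upperCentralSeries G 2 := by
          rw [mem_upperCentralSeries_succ_iff]
          intro y
          rw [upperCentralSeries_one]
          exact ih (hx y)
        exact hle this
    obtain ⟨n, hn⟩ := Group.IsNilpotent.nilpotent' (G := G)
    exact hZ (le_antisymm le_top (hn ▸ hall n))
  -- pick g ∈ Z_2 \ center
  obtain ⟨g, hg2, hgZ⟩ := SetLike.not_le_iff_exists.mp hstep
  rw [Subgroup.mem_center_iff] at hgZ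
  push_neg at hgZ
  obtain ⟨f, hfg⟩ := hgZ
  -- the commutator c = g⁻¹ * f⁻¹ * g * f is central and nontrivial
  have hc : ∀ y : G, g * y * g⁻¹ * y⁻¹ ∈ Subgroup.center G := by
    intro y
    have := (mem_upperCentralSeries_succ_iff (n := 1)).mp hg2 y
    rwa [upperCentralSeries_one] at this
  have hcen : (g⁻¹ * f⁻¹ * g * f) ∈ Subgroup.center G := by
    have h1 : g * f⁻¹ * g⁻¹ * f ∈ Subgroup.center G := by simpa using hc f⁻¹
    have h2 := (Subgroup.center G).inv_mem h1
    have h3 := Subgroup.Normal.conj_mem inferInstance _ h2 g⁻¹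
    have he : g⁻¹ * (g * f⁻¹ * g⁻¹ * f)⁻¹ * g⁻¹⁻¹ = g⁻¹ * f⁻¹ * g * f := by group
    rwa [he] at h3
  have hcen' := Subgroup.mem_center_iff.mp hcen
  have hone := comm_eq_one_of_central le hv g f
    (by rw [hcen' g]) (by rw [hcen' f])
  apply hfg
  have hkey : g * f = f * g * (g⁻¹ * f⁻¹ * g * f) := by group
  rw [hone, mul_one] at hkey
  exact hkey.symm
end

section
/- Let G be a c-valued group, let f, g ∈ G and let n ∈ ℤ with fⁿ ≠ 1. If fⁿ commutes with g, then f commutes with g. -/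
/-!
By D5, any two nontrivial elements commuting with a fixed nontrivial `h` are `≍`-equivalent to `h`,
hence to each other. If two such elements `a`, `b` did not commute, their commutator would be
another one, hence `≍ a`, contradicting D6. Thus the centralizer of a nontrivial element is
commutative, and `f`, `g` both lie in the centralizer of `f ^ n`.
-/

variable {G : Type*} [Group G]

theorem commute_of_inv_mul_inv_mul_mul_eq_one {a b : G} (h : a⁻¹ * b⁻¹ * a * b = 1) :
    Commute a b := by
  rw [← Commute.inv_inv_iff, ← commutatorElement_eq_one_iff_commute, commutatorElement_def,
    inv_inv, inv_inv, h]

theorem Commute.inv_mul_inv_mul_mul_right_s4 {h a b : G} (ha : Commute h a) (hb : Commute h b) :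
    Commute h (a⁻¹ * b⁻¹ * a * b) :=
  ((ha.inv_right.mul_right hb.inv_right).mul_right ha).mul_right hb

theorem veq.symm {α : Type*} {r : α → α → Prop} {a b : α} (hab : veq r a b) : veq r b a :=
  ⟨hab.2, hab.1⟩

variable {le : G → G → Prop}

theorem IsValuation.veq_trans (hv : IsValuation le) {a b c : G} (hab : veq le a b)
    (hbc : veq le b c) : veq le a c :=
  ⟨hv.trans _ _ _ hab.1 hbc.1, hv.trans _ _ _ hbc.2 hab.2⟩

namespace IsCValuation

variable {h a b : G}

theorem veq_of_commute_of_commute (hv : IsCValuation le) (hh : h ≠ 1) (ha : a ≠ 1) (hb : b ≠ 1)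
    (hha : Commute h a) (hhb : Commute h b) : veq le a b :=
  hv.veq_trans (hv.d5 h a hh ha hha).symm (hv.d5 h b hh hb hhb)

theorem commute_of_commute_of_commute (hv : IsCValuation le) (hh : h ≠ 1) (hha : Commute h a)
    (hhb : Commute h b) : Commute a b := by
  rcases eq_or_ne a 1 with rfl | ha
  · exact Commute.one_left b
  rcases eq_or_ne b 1 with rfl | hb
  · exact Commute.one_right a
  by_contra hab
  have hc : a⁻¹ * b⁻¹ * a * b ≠ 1 := fun h1 => hab (commute_of_inv_mul_inv_mul_mul_eq_one h1)
  have hlt : vlt le (a⁻¹ * b⁻¹ * a * b) a :=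
    hv.d6 a b ha hb (hv.veq_of_commute_of_commute hh ha hb hha hhb)
  exact hlt.2 (hv.veq_of_commute_of_commute hh ha hc hha (hha.inv_mul_inv_mul_mul_right_s4 hhb)).1

end IsCValuation

/-- Lemma 2.14: in a c-valued group, if `f^n ≠ 1` commutes with `g`,
then `f` commutes with `g`. -/
theorem commute_of_zpow_commute (le : G → G → Prop) (hv : IsCValuation le)
    (f g : G) (n : ℤ) (hfn : f ^ n ≠ 1) (hc : f ^ n * g = g * f ^ n) :
    f * g = g * f :=
  hv.commute_of_commute_of_commute hfn (Commute.self_zpow f n).symm hc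
end

section
/- Let G be a c-valued group and n ∈ ℕ. Suppose there exist elements h₁ ≺ h₂ ≺ ⋯ ≺ hₙ of G, all ≠ 1, such that every f ∈ G with f ≠ 1 satisfies f ≍ hᵢ for some i (i.e. the quotient of G∖{1} by the equivalence relation ≍ has exactly n elements). Then the n-th term of the derived series of G is trivial; in particular G is solvable. -/
variable {G : Type*} [Group G]

section Aux

open scoped commutatorElement

variable (le : G → G → Prop)

lemma aux_conj_iff (hv : IsValuation le) (c f g : G) :
    le (c * f * c⁻¹) (c * g * c⁻¹) ↔ le f g := by
  constructor
  · intro hle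
    have h2 := hv.d3 _ _ c⁻¹ hle
    rw [show c⁻¹ * (c * f * c⁻¹) * c⁻¹⁻¹ = f by group,
        show c⁻¹ * (c * g * c⁻¹) * c⁻¹⁻¹ = g by group] at h2
    exact h2
  · exact hv.d3 f g c

lemma aux_conj_veq (hv : IsValuation le) (c f g : G) (hfg : veq le f g) :
    veq le (c * f * c⁻¹) (c * g * c⁻¹) :=
  ⟨(aux_conj_iff le hv c f g).2 hfg.1, (aux_conj_iff le hv c g f).2 hfg.2⟩

variable {n : ℕ} (h : Fin n → G)

lemma aux_idx (hchain : ∀ i j : Fin n, i < j → vlt le (h i) (h j))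
    {i j : Fin n} (hle : le (h i) (h j)) : i ≤ j := by
  by_contra hc
  exact (hchain j i (lt_of_not_ge hc)).2 hle

lemma aux_idx_eq (hv : IsValuation le)
    (hchain : ∀ i j : Fin n, i < j → vlt le (h i) (h j))
    {f : G} {i j : Fin n} (hi : veq le f (h i)) (hj : veq le f (h j)) : i = j :=
  le_antisymm (aux_idx le h hchain (hv.trans _ _ _ hi.2 hj.1))
    (aux_idx le h hchain (hv.trans _ _ _ hj.2 hi.1))

/-- Conjugation fixes each class. -/
lemma aux_conj_class (hv : IsValuation le)
    (hne : ∀ i, h i ≠ 1)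
    (hchain : ∀ i j : Fin n, i < j → vlt le (h i) (h j))
    (hcover : ∀ f : G, f ≠ 1 → ∃ i, veq le f (h i))
    (c x : G) (hx : x ≠ 1) : veq le (c * x * c⁻¹) x := by
  have hconj_ne : ∀ d y : G, y ≠ 1 → d * y * d⁻¹ ≠ 1 := by
    intro d y hy hcon
    apply hy
    have := congrArg (fun z => d⁻¹ * z * d) hcon
    simpa [mul_assoc] using this
  have hσ : ∀ d : G, ∃ σ : Fin n → Fin n, ∀ i, veq le (d * h i * d⁻¹) (h (σ i)) := by
    intro d
    choose σ hσ using fun i => hcover (d * h i * d⁻¹) (hconj_ne d (h i) (hne i))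
    exact ⟨σ, hσ⟩
  have hmono : ∀ d : G, ∀ σ : Fin n → Fin n,
      (∀ i, veq le (d * h i * d⁻¹) (h (σ i))) → StrictMono σ := by
    intro d σ hσd i j hij
    have h1 : le (h (σ i)) (h (σ j)) :=
      hv.trans _ _ _ (hσd i).2 (hv.trans _ _ _
        ((aux_conj_iff le hv d _ _).2 (hchain i j hij).1) (hσd j).1)
    have h2 : ¬ le (h (σ j)) (h (σ i)) := by
      intro hle
      exact (hchain i j hij).2 <| (aux_conj_iff le hv d _ _).1 <|
        hv.trans _ _ _ (hσd j).1 (hv.trans _ _ _ hle (hσd i).2)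
    rcases lt_or_eq_of_le (aux_idx le h hchain h1) with hlt | heq
    · exact hlt
    · exact absurd (heq ▸ hv.refl (h (σ i))) h2
  obtain ⟨σ, hσc⟩ := hσ c
  obtain ⟨σ', hσc'⟩ := hσ c⁻¹
  have hcomp : ∀ i, σ' (σ i) = i := by
    intro i
    have h1 : veq le (c⁻¹ * (h (σ i)) * c⁻¹⁻¹) (h (σ' (σ i))) := hσc' (σ i)
    have h2 : veq le (c⁻¹ * (c * h i * c⁻¹) * c⁻¹⁻¹) (c⁻¹ * (h (σ i)) * c⁻¹⁻¹) :=
      aux_conj_veq le hv c⁻¹ _ _ (hσc i)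
    rw [show c⁻¹ * (c * h i * c⁻¹) * c⁻¹⁻¹ = h i by group] at h2
    exact aux_idx_eq le h hv hchain
      ⟨hv.trans _ _ _ h2.1 h1.1, hv.trans _ _ _ h1.2 h2.2⟩ ⟨hv.refl _, hv.refl _⟩
  have hid : ∀ i, σ i = i := by
    haveI : WellFoundedLT (Fin n) := Finite.to_wellFoundedLT
    intro i
    have l1 : i ≤ σ i := (hmono c σ hσc).le_apply
    have l2 : σ i ≤ σ' (σ i) := (hmono c⁻¹ σ' hσc').le_apply
    rw [hcomp i] at l2
    exact le_antisymm l2 l1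
  obtain ⟨a, ha⟩ := hcover x hx
  have h1 : veq le (c * x * c⁻¹) (c * h a * c⁻¹) := aux_conj_veq le hv c _ _ ha
  have h2 : veq le (c * h a * c⁻¹) (h a) := by
    have := hσc a; rwa [hid a] at this
  exact ⟨hv.trans _ _ _ h1.1 (hv.trans _ _ _ h2.1 ha.2),
         hv.trans _ _ _ ha.1 (hv.trans _ _ _ h2.2 h1.2)⟩

/-- The subgroup of elements dominated by some `h i` with `i < m` (together with `1`). -/
def valS (hv : IsValuation le) (m : ℕ) : Subgroup G where
  carrier := {f | f = 1 ∨ ∃ i : Fin n, (i : ℕ) < m ∧ le f (h i)}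
  one_mem' := Or.inl rfl
  mul_mem' := by
    rintro a b (rfl | ⟨i, hi, hai⟩) hb
    · simpa using hb
    · rcases hb with rfl | ⟨j, hj, hbj⟩
      · exact Or.inr ⟨i, hi, by simpa using hai⟩
      · rcases hv.d2 a b with hd | hd
        · exact Or.inr ⟨i, hi, hv.trans _ _ _ hd hai⟩
        · exact Or.inr ⟨j, hj, hv.trans _ _ _ hd hbj⟩
  inv_mem' := by
    rintro a (rfl | ⟨i, hi, hai⟩)
    · exact Or.inl inv_one
    · exact Or.inr ⟨i, hi, hv.trans _ _ _ (hv.d4 a).2 hai⟩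

lemma mem_valS (hv : IsValuation le) (m : ℕ) (f : G) :
    f ∈ valS le h hv m ↔ f = 1 ∨ ∃ i : Fin n, (i : ℕ) < m ∧ le f (h i) := Iff.rfl

lemma comm_mem_valS (hv : IsCValuation le)
    (hne : ∀ i, h i ≠ 1)
    (hchain : ∀ i j : Fin n, i < j → vlt le (h i) (h j))
    (hcover : ∀ f : G, f ≠ 1 → ∃ i, veq le f (h i))
    (m : ℕ) (f g : G)
    (hf : f ∈ valS le h hv.toIsValuation (m + 1))
    (hg : g ∈ valS le h hv.toIsValuation (m + 1)) :
    ⁅f, g⁆ ∈ valS le h hv.toIsValuation m := by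
  have hV := hv.toIsValuation
  by_cases hf1 : f = 1
  · subst hf1; rw [commutatorElement_one_left]; exact Or.inl rfl
  by_cases hg1 : g = 1
  · subst hg1; rw [commutatorElement_one_right]; exact Or.inl rfl
  obtain ⟨a, hfa⟩ := hcover f hf1
  obtain ⟨b, hgb⟩ := hcover g hg1
  -- bounds on a and b
  have hbound : ∀ (x : G) (i : Fin n), x ≠ 1 → veq le x (h i) →
      x ∈ valS le h hV (m + 1) → (i : ℕ) < m + 1 := by
    rintro x i hx hxi (rfl | ⟨j, hj, hxj⟩)
    · exact absurd rfl hx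
    · have : i ≤ j := aux_idx le h hchain (hV.trans _ _ _ hxi.2 hxj)
      exact lt_of_le_of_lt (by exact_mod_cast this) hj
  have ha : (a : ℕ) < m + 1 := hbound f a hf1 hfa hf
  have hb : (b : ℕ) < m + 1 := hbound g b hg1 hgb hg
  -- the easy case: f strictly dominated (class of f strictly below m)
  have key : ∀ (x y : G) (i : Fin n), x ≠ 1 → veq le x (h i) → (i : ℕ) < m →
      ⁅x, y⁆ ∈ valS le h hV m := by
    intro x y i hx hxi him
    have hco : veq le (y * x⁻¹ * y⁻¹) x⁻¹ :=
      aux_conj_class le h hV hne hchain hcover y x⁻¹ (inv_ne_one.2 hx)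
    have hrw : ⁅x, y⁆ = x * (y * x⁻¹ * y⁻¹) := by group
    have hxinv : le x⁻¹ (h i) := hV.trans _ _ _ (hV.d4 x).2 hxi.1
    rcases hV.d2 x (y * x⁻¹ * y⁻¹) with hd | hd
    · exact Or.inr ⟨i, him, by rw [hrw]; exact hV.trans _ _ _ hd hxi.1⟩
    · exact Or.inr ⟨i, him, by
        rw [hrw]; exact hV.trans _ _ _ hd (hV.trans _ _ _ hco.1 hxinv)⟩
  rcases lt_trichotomy a b with hab | hab | hab
  · exact key f g a hf1 hfa (lt_of_lt_of_le (by exact_mod_cast hab) (Nat.lt_succ_iff.1 hb))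
  · -- same class: use d6
    subst hab
    have hfg : veq le f g := ⟨hV.trans _ _ _ hfa.1 hgb.2, hV.trans _ _ _ hgb.1 hfa.2⟩
    have hfg' : veq le f⁻¹ g⁻¹ :=
      ⟨hV.trans _ _ _ (hV.d4 f).2 (hV.trans _ _ _ hfg.1 (hV.d4 g).1),
       hV.trans _ _ _ (hV.d4 g).2 (hV.trans _ _ _ hfg.2 (hV.d4 f).1)⟩
    have hd6 := hv.d6 f⁻¹ g⁻¹ (inv_ne_one.2 hf1) (inv_ne_one.2 hg1) hfg'
    rw [show f⁻¹⁻¹ * g⁻¹⁻¹ * f⁻¹ * g⁻¹ = ⁅f, g⁆ by group] at hd6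
    by_cases hc1 : ⁅f, g⁆ = 1
    · exact Or.inl hc1
    obtain ⟨k, hk⟩ := hcover ⁅f, g⁆ hc1
    have hkle : le (h k) (h a) :=
      hV.trans _ _ _ hk.2 (hV.trans _ _ _ hd6.1 (hV.trans _ _ _ (hV.d4 f).2 hfa.1))
    have hka : k ≤ a := aux_idx le h hchain hkle
    have hkne : k ≠ a := by
      intro hkaeq
      apply hd6.2
      subst hkaeq
      exact hV.trans _ _ _ (hV.trans _ _ _ (hV.d4 f).2 hfa.1) hk.2
    have hklt : (k : ℕ) < m :=
      lt_of_lt_of_le (by exact_mod_cast lt_of_le_of_ne hka hkne) (Nat.lt_succ_iff.1 ha)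
    exact Or.inr ⟨k, hklt, hk.1⟩
  · -- b < a : use the inverse commutator
    have := key g f b hg1 hgb (lt_of_lt_of_le (by exact_mod_cast hab) (Nat.lt_succ_iff.1 ha))
    have hinv := (valS le h hV m).inv_mem this
    rwa [commutatorElement_inv] at hinv

end Aux

/-- Proposition 2.15 (finite value set case): if a c-valued group has exactly `n`
equivalence classes of nonidentity elements under `≍`, then the `n`-th term of the
derived series is trivial; in particular the group is solvable. -/
theorem derivedSeries_eq_bot_of_finite_valueSet (le : G → G → Prop)
    (hv : IsCValuation le) (n : ℕ) (h : Fin n → G)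
    (hne : ∀ i, h i ≠ 1)
    (hchain : ∀ i j : Fin n, i < j → vlt le (h i) (h j))
    (hcover : ∀ f : G, f ≠ 1 → ∃ i, veq le f (h i)) :
    derivedSeries G n = ⊥ ∧ IsSolvable G := by
  have hV := hv.toIsValuation
  have hD : ∀ k, derivedSeries G k ≤ valS le h hV (n - k) := by
    intro k
    induction k with
    | zero =>
      intro f _
      by_cases hf1 : f = 1
      · exact Or.inl hf1
      · obtain ⟨i, hi⟩ := hcover f hf1
        exact Or.inr ⟨i, by simpa using i.isLt, hi.1⟩
    | succ k ih =>
      rw [derivedSeries_succ]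
      rw [Subgroup.commutator_le]
      intro f hf g hg
      have hf' := ih hf
      have hg' := ih hg
      rcases Nat.eq_zero_or_pos (n - k) with hz | hp
      · have hf1 : f = 1 := by
          rcases hf' with hh | ⟨i, hi, _⟩
          · exact hh
          · omega
        have hg1 : g = 1 := by
          rcases hg' with hh | ⟨i, hi, _⟩
          · exact hh
          · omega
        subst hf1; subst hg1
        simpa using (valS le h hV (n - (k + 1))).one_mem
      · obtain ⟨m, hm⟩ : ∃ m, n - k = m + 1 := ⟨n - k - 1, by omega⟩
        have hm' : n - (k + 1) = m := by omega
        rw [hm']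
        rw [hm] at hf' hg'
        exact comm_mem_valS le h hv hne hchain hcover m f g hf' hg'
  have hbot : derivedSeries G n = ⊥ := by
    rw [eq_bot_iff]
    intro f hf
    have := hD n hf
    simp only [Nat.sub_self] at this
    rcases this with hh | ⟨i, hi, _⟩
    · simp [hh]
    · omega
  exact ⟨hbot, ⟨⟨n, hbot⟩⟩⟩
end

section
/- Let G be a c-valued group. Then every finite subgroup of G is solvable. -/
variable {G : Type*} [Group G]

/-- A finite nonempty finset has a `le`-maximal element. -/
lemma exists_vmax_finset (le : G → G → Prop) (hv : IsValuation le) (t : Finset G)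
    (ht : t.Nonempty) : ∃ m ∈ t, ∀ x ∈ t, le x m := by
  classical
  induction t using Finset.induction_on with
  | empty => simp at ht
  | @insert a s _ ih =>
    by_cases hs : s.Nonempty
    · obtain ⟨m, hm, hmax⟩ := ih hs
      rcases hv.total a m with h | h
      · exact ⟨m, Finset.mem_insert_of_mem hm, fun x hx => by
          rcases Finset.mem_insert.mp hx with rfl | hx
          · exact h
          · exact hmax x hx⟩
      · exact ⟨a, Finset.mem_insert_self a s, fun x hx => by
          rcases Finset.mem_insert.mp hx with rfl | hx
          · exact hv.refl x
          · exact hv.trans _ _ _ (hmax x hx) h⟩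
    · rw [Finset.not_nonempty_iff_eq_empty] at hs; subst hs
      refine ⟨a, by simp, fun x hx => ?_⟩
      simp only [Finset.mem_insert, Finset.notMem_empty, or_false] at hx
      subst hx; exact hv.refl x

/-- A finite nonempty set has a `le`-maximal element. -/
lemma exists_vmax (le : G → G → Prop) (hv : IsValuation le) {s : Set G}
    (hs : s.Finite) (hne : s.Nonempty) : ∃ m ∈ s, ∀ x ∈ s, le x m := by
  obtain ⟨t, rfl⟩ := hs.exists_finset_coe
  simpa using exists_vmax_finset le hv t (by simpa using hne)

/-- Corollary 2.16: every finite subgroup of a c-valued group is solvable. -/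
theorem finite_subgroup_solvable (le : G → G → Prop) (hv : IsCValuation le) :
    ∀ H : Subgroup G, (H : Set G).Finite → IsSolvable H := by
  have V := hv.toIsValuation
  -- strong induction on the cardinality of H
  suffices Hgen : ∀ n, ∀ H : Subgroup G, (H : Set G).ncard = n →
      (H : Set G).Finite → IsSolvable H by
    exact fun H hf => Hgen _ H rfl hf
  intro n
  induction n using Nat.strong_induction_on with
  | _ n ih =>
  intro H hn hfin
  -- the set of nontrivial elements of H
  by_cases htriv : ∀ h ∈ H, h = 1
  · haveI : Subsingleton H := ⟨fun a b => Subtype.ext (by rw [htriv a a.2, htriv b b.2])⟩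
    show Group.IsSolvable H; infer_instance
  push_neg at htriv
  -- pick a maximal nontrivial element m of H
  obtain ⟨m, hmS, hmax0⟩ : ∃ m ∈ {h : G | h ∈ H ∧ h ≠ 1},
      ∀ x ∈ {h : G | h ∈ H ∧ h ≠ 1}, le x m := by
    obtain ⟨h, hh, hne⟩ := htriv
    exact exists_vmax le V (s := {h : G | h ∈ H ∧ h ≠ 1})
      (hfin.subset (by intro x hx; exact hx.1)) ⟨h, hh, hne⟩
  obtain ⟨hmH, hm1⟩ := hmS
  -- m dominates every element of H
  have hmax : ∀ x ∈ H, le x m := by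
    intro x hx
    by_cases hx1 : x = 1
    · subst hx1; exact (V.d1 m hm1).1
    · exact hmax0 x ⟨hx, hx1⟩
  -- inverses are dominated alike
  have hinv : ∀ f : G, ¬ le m f → ¬ le m f⁻¹ := fun f hf hmf =>
    hf (V.trans _ _ _ hmf (V.d4 f).2)
  -- conjugation by elements of H preserves strict domination by m
  have hconjm : ∀ g ∈ H, le m (g * m * g⁻¹) := by
    intro g hg
    have h1 : le (g⁻¹ * m * g) m := hmax _ (H.mul_mem (H.mul_mem (H.inv_mem hg) hmH) hg)
    have h2 := V.d3 _ _ g h1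
    have : g * (g⁻¹ * m * g) * g⁻¹ = m := by group
    rwa [this] at h2
  have hconj : ∀ g ∈ H, ∀ f : G, ¬ le m f → ¬ le m (g * f * g⁻¹) := by
    intro g hg f hf hc
    have h2 := V.d3 _ _ g⁻¹ hc
    have e : g⁻¹ * (g * f * g⁻¹) * g⁻¹⁻¹ = f := by group
    rw [e] at h2
    exact hf (V.trans _ _ _ (by simpa using hconjm g⁻¹ (H.inv_mem hg)) h2)
  -- every commutator of elements of H is strictly dominated by m
  have hcomm : ∀ x ∈ H, ∀ y ∈ H, ¬ le m (x * y * x⁻¹ * y⁻¹) := by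
    intro x hx y hy
    by_cases hx1 : x = 1
    · simpa [hx1] using (V.d1 m hm1).2
    by_cases hy1 : y = 1
    · simpa [hy1] using (V.d1 m hm1).2
    by_cases hxm : le m x
    · by_cases hym : le m y
      · -- both maximal: D6
        have hveq : veq le x⁻¹ y⁻¹ := by
          refine ⟨?_, ?_⟩
          · exact V.trans _ _ _ ((V.d4 x).2) (V.trans _ _ _ (V.trans _ _ _ (hmax x hx) hym)
              (V.d4 y).1)
          · exact V.trans _ _ _ ((V.d4 y).2) (V.trans _ _ _ (V.trans _ _ _ (hmax y hy) hxm)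
              (V.d4 x).1)
        have h6 := hv.d6 x⁻¹ y⁻¹ (by simpa using hx1) (by simpa using hy1) hveq
        rw [inv_inv, inv_inv] at h6
        intro hc
        exact h6.2 (V.trans _ _ _ (V.d4 x).2 (V.trans _ _ _ (hmax x hx) hc))
      · -- y strictly below m
        have h1 : ¬ le m (x * y * x⁻¹) := hconj x hx y hym
        have h2 : ¬ le m y⁻¹ := hinv y hym
        intro hc
        rcases V.d2 (x * y * x⁻¹) y⁻¹ with h | h
        · exact h1 (V.trans _ _ _ hc h)
        · exact h2 (V.trans _ _ _ hc h)
    · -- x strictly below m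
      have h1 : ¬ le m (y * x⁻¹ * y⁻¹) := hconj y hy x⁻¹ (hinv x hxm)
      intro hc
      have e : x * (y * x⁻¹ * y⁻¹) = x * y * x⁻¹ * y⁻¹ := by group
      rcases V.d2 x (y * x⁻¹ * y⁻¹) with h | h <;> rw [e] at h
      · exact hxm (V.trans _ _ _ hc h)
      · exact h1 (V.trans _ _ _ hc h)
  -- the subgroup of elements strictly dominated by m
  let K : Subgroup G :=
    { carrier := {h : G | h ∈ H ∧ ¬ le m h}
      one_mem' := ⟨H.one_mem, (V.d1 m hm1).2⟩
      mul_mem' := by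
        rintro a b ⟨haH, ha⟩ ⟨hbH, hb⟩
        refine ⟨H.mul_mem haH hbH, fun hc => ?_⟩
        rcases V.d2 a b with h | h
        · exact ha (V.trans _ _ _ hc h)
        · exact hb (V.trans _ _ _ hc h)
      inv_mem' := by
        rintro a ⟨haH, ha⟩
        exact ⟨H.inv_mem haH, hinv a ha⟩ }
  have hKH : K ≤ H := fun x hx => hx.1
  have hKfin : (K : Set G).Finite := hfin.subset hKH
  have hKlt : (K : Set G).ncard < n := by
    rw [← hn]
    exact Set.ncard_lt_ncard ⟨hKH, fun hsub => (hsub hmH).2 (V.refl m)⟩ hfin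
  have hKsolv : Group.IsSolvable K := ih _ hKlt K rfl hKfin
  -- the commutator subgroup of H sits inside K
  have hcommle : commutator H ≤ K.subgroupOf H := by
    rw [commutator_def, Subgroup.commutator_le]
    intro g₁ _ g₂ _
    rw [Subgroup.mem_subgroupOf]
    open scoped commutatorElement in
    have : ((⁅g₁, g₂⁆ : H) : G) = (g₁ : G) * g₂ * (g₁ : G)⁻¹ * (g₂ : G)⁻¹ := by
      simp [commutatorElement_def, mul_assoc]
    rw [this]
    exact ⟨H.mul_mem (H.mul_mem (H.mul_mem g₁.2 g₂.2) (H.inv_mem g₁.2)) (H.inv_mem g₂.2),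
      hcomm _ g₁.2 _ g₂.2⟩
  haveI : Group.IsSolvable (K.subgroupOf H) :=
    solvable_of_solvable_injective (f := (Subgroup.subgroupOfEquivOfLe hKH).toMonoidHom)
      (Subgroup.subgroupOfEquivOfLe hKH).injective
  haveI : Group.IsSolvable (commutator H) :=
    solvable_of_solvable_injective (Subgroup.inclusion_injective hcommle)
  refine solvable_of_ker_le_range (commutator H).subtype (Abelianization.of) ?_
  intro x hx
  rw [Subgroup.range_subtype]
  rw [MonoidHom.mem_ker] at hx
  exact (QuotientGroup.eq_one_iff x).mp hx
end

section
/- Let G be an ordered valued group satisfying the growth axiom (GA). Let h, g, ε ∈ G with h > 1, g > 1, ε > 1, g ≺ h and ε < g. Then ⁅h⁻¹,g⁻¹⁆ ≥ ⁅h⁻¹,ε⁻¹⁆ in the order, and ⁅h⁻¹,ε⁻¹⁆ ⪯ ⁅h⁻¹,g⁻¹⁆, where ⁅a,b⁆ := a⁻¹*b⁻¹*a*b. -/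
variable {G : Type*} [Group G] [LinearOrder G]

/-- The linear order makes `G` an ordered group and the valuation is compatible:
`1 < f ≤ g` implies `f ⪯ g`. -/
structure IsOrderedValuation (le : G → G → Prop) extends IsValuation le : Prop where
  mul_lt_mul_left : ∀ f g h : G, g < h → f * g < f * h
  mul_lt_mul_right : ∀ f g h : G, g < h → g * f < h * f
  le_of_lt_of_le : ∀ f g : G, 1 < f → f ≤ g → le f g

/-- The growth axiom GA: if `f > 1`, `g > 1` and `g ≺ f` then `f*g*f⁻¹ > g`. -/
def GrowthAxiom (le : G → G → Prop) : Prop :=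
  ∀ f g : G, 1 < f → 1 < g → vlt le g f → g < f * g * f⁻¹

/-- The commutator `⁅a,b⁆ = a⁻¹*b⁻¹*a*b`. -/
def brkt (a b : G) : G := a⁻¹ * b⁻¹ * a * b

/-!
Put `k = ε⁻¹ * g`. Since `[h⁻¹, x⁻¹] = h x h⁻¹ x⁻¹`, the two commutators factor as
`[h⁻¹, ε⁻¹] = (h ε h⁻¹) k g⁻¹` and `[h⁻¹, g⁻¹] = (h ε h⁻¹) (h k h⁻¹) g⁻¹`.
Now `k > 1` and, by D2 and D4, `k ⪯ g ≺ h`, so GA gives `k < h k h⁻¹`, which is the order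
inequality. GA applied to `ε` gives `[h⁻¹, ε⁻¹] > 1`, and then compatibility of `⪯` with `<`
turns the order inequality into the dominance one.
-/

theorem brkt_inv_inv {α : Type*} [Group α] (a b : α) : brkt a⁻¹ b⁻¹ = a * b * a⁻¹ * b⁻¹ := by
  simp only [brkt, inv_inv]

theorem one_lt_brkt_inv_inv [MulRightStrictMono G] {h a : G} (ha : a < h * a * h⁻¹) :
    1 < brkt h⁻¹ a⁻¹ := by
  rw [brkt_inv_inv]
  exact lt_mul_inv_iff_lt.mpr ha

theorem brkt_inv_inv_lt_brkt_inv_inv [MulLeftStrictMono G] [MulRightStrictMono G] {h a b : G}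
    (hab : a⁻¹ * b < h * (a⁻¹ * b) * h⁻¹) : brkt h⁻¹ a⁻¹ < brkt h⁻¹ b⁻¹ := by
  rw [brkt_inv_inv, brkt_inv_inv]
  calc h * a * h⁻¹ * a⁻¹ = h * a * h⁻¹ * (a⁻¹ * b) * b⁻¹ := by group
    _ < h * a * h⁻¹ * (h * (a⁻¹ * b) * h⁻¹) * b⁻¹ := by gcongr
    _ = h * b * h⁻¹ * b⁻¹ := by group

namespace IsValuation

variable {α : Type*} [Group α] {le : α → α → Prop}

theorem vlt_of_le_of_vlt_s11 (hv : IsValuation le) {f g h : α} (hfg : le f g) (hgh : vlt le g h) :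
    vlt le f h :=
  ⟨hv.trans _ _ _ hfg hgh.1, fun hhf => hgh.2 (hv.trans _ _ _ hhf hfg)⟩

theorem inv_mul_le_of_le (hv : IsValuation le) {a b : α} (hab : le a b) : le (a⁻¹ * b) b :=
  (hv.d2 a⁻¹ b).elim (fun h => hv.trans _ _ _ (hv.trans _ _ _ h (hv.d4 a).2) hab) id

end IsValuation

namespace IsOrderedValuation

variable {le : G → G → Prop}

theorem mulLeftStrictMono (hv : IsOrderedValuation le) : MulLeftStrictMono G :=
  ⟨fun a _ _ h => hv.mul_lt_mul_left a _ _ h⟩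

theorem mulRightStrictMono (hv : IsOrderedValuation le) : MulRightStrictMono G :=
  ⟨fun a _ _ h => hv.mul_lt_mul_right a _ _ h⟩

end IsOrderedValuation

theorem commutator_ge_right_general (le : G → G → Prop) (hv : IsOrderedValuation le)
    (hga : GrowthAxiom le) (h g ε : G)
    (hh : 1 < h) (he : 1 < ε)
    (hgh : vlt le g h) (heg : ε < g) :
    brkt h⁻¹ ε⁻¹ ≤ brkt h⁻¹ g⁻¹ ∧ le (brkt h⁻¹ ε⁻¹) (brkt h⁻¹ g⁻¹) := by
  have := hv.mulLeftStrictMono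
  have := hv.mulRightStrictMono
  have hεg : le ε g := hv.le_of_lt_of_le ε g he heg.le
  have hεh : vlt le ε h := hv.vlt_of_le_of_vlt_s11 hεg hgh
  have hk : 1 < ε⁻¹ * g := lt_inv_mul_iff_lt.mpr heg
  have hkh : vlt le (ε⁻¹ * g) h := hv.vlt_of_le_of_vlt_s11 (hv.inv_mul_le_of_le hεg) hgh
  have hlt : brkt h⁻¹ ε⁻¹ < brkt h⁻¹ g⁻¹ :=
    brkt_inv_inv_lt_brkt_inv_inv (hga h _ hh hk hkh)
  have hpos : 1 < brkt h⁻¹ ε⁻¹ := one_lt_brkt_inv_inv (hga h ε hh he hεh)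
  exact ⟨hlt.le, hv.le_of_lt_of_le _ _ hpos hlt.le⟩

/-- Lemma 4.12: in an ordered valued group satisfying GA, for positive `h, g, ε`
with `g ≺ h` and `ε < g`, one has `⁅h⁻¹,g⁻¹⁆ ≥ ⁅h⁻¹,ε⁻¹⁆` and
`⁅h⁻¹,ε⁻¹⁆ ⪯ ⁅h⁻¹,g⁻¹⁆`. -/
theorem commutator_ge_right (le : G → G → Prop) (hv : IsOrderedValuation le)
    (hga : GrowthAxiom le) (h g ε : G)
    (hh : 1 < h) (hg : 1 < g) (he : 1 < ε)
    (hgh : vlt le g h) (heg : ε < g) :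
    brkt h⁻¹ ε⁻¹ ≤ brkt h⁻¹ g⁻¹ ∧ le (brkt h⁻¹ ε⁻¹) (brkt h⁻¹ g⁻¹) :=
  commutator_ge_right_general le hv hga h g ε hh he hgh heg
end

section
/- Let G be a valued group. The following are equivalent: (a) for all f, g ∈ G, f*g ≍ g*f; (b) for every f ∈ G and every k ∈ G with k ≠ 1, the right ball equals the left ball: {h ∈ G : f⁻¹*h ≺ k} = {h ∈ G : h*f⁻¹ ≺ k}. -/
variable {G : Type*} [Group G]

/-! `f⁻¹ * h` and `h * f⁻¹` are the products of `f⁻¹` and `h` in the two orders, so under (a)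
they are `≍` and hence lie below the same radii. Conversely, if `b * a ≺ a * b`, then `b` lies in
the left ball of radius `a * b` around `a⁻¹` but not in the right one. -/

theorem vlt_congr_left {α : Type*} {le : α → α → Prop}
    (htrans : ∀ f g h : α, le f g → le g h → le f h)
    {a b : α} (hab : veq le a b) (k : α) : vlt le a k ↔ vlt le b k :=
  ⟨fun ⟨hak, hka⟩ => ⟨htrans _ _ _ hab.2 hak, fun hkb => hka (htrans _ _ _ hkb hab.2)⟩,
   fun ⟨hbk, hkb⟩ => ⟨htrans _ _ _ hab.1 hbk, fun hka => hkb (htrans _ _ _ hka hab.1)⟩⟩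

theorem vlt_of_not_le {α : Type*} {le : α → α → Prop} (htotal : ∀ f g : α, le f g ∨ le g f)
    {a b : α} (h : ¬ le a b) : vlt le b a :=
  ⟨(htotal a b).resolve_left h, h⟩

theorem le_mul_comm_of_balls_eq {le : G → G → Prop} (hrefl : ∀ f : G, le f f)
    (htotal : ∀ f g : G, le f g ∨ le g f)
    (hballs : ∀ f k : G, k ≠ 1 →
      {h : G | vlt le (f⁻¹ * h) k} = {h : G | vlt le (h * f⁻¹) k})
    (a b : G) : le (a * b) (b * a) := by
  by_contra hab
  have hne : a * b ≠ 1 := fun h1 => hab (by rw [h1, mul_eq_one_comm.mp h1]; exact hrefl 1)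
  have hleft : vlt le (b * a⁻¹⁻¹) (a * b) := by
    rw [inv_inv]; exact vlt_of_not_le htotal hab
  have hright : vlt le (a⁻¹⁻¹ * b) (a * b) :=
    (Set.ext_iff.mp (hballs a⁻¹ (a * b) hne) b).mpr hleft
  rw [inv_inv] at hright
  exact hright.2 (hrefl _)

/-- Lemma 7.1: `f*g ≍ g*f` for all `f, g` iff every right ball coincides with the
corresponding left ball. -/
theorem mul_equiv_iff_balls_eq (le : G → G → Prop) (hv : IsValuation le) :
    (∀ f g : G, veq le (f * g) (g * f)) ↔
      (∀ f k : G, k ≠ 1 →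
        {h : G | vlt le (f⁻¹ * h) k} = {h : G | vlt le (h * f⁻¹) k}) := by
  constructor
  · intro hcomm f k _
    ext h
    exact vlt_congr_left hv.trans (hcomm f⁻¹ h) k
  · intro hballs f g
    exact ⟨le_mul_comm_of_balls_eq hv.refl hv.total hballs f g,
      le_mul_comm_of_balls_eq hv.refl hv.total hballs g f⟩
end

section
/- Let G be a valued group. The following are equivalent: (a) G is nearly Abelian; (b) for all f ∈ G and all g ∈ G with g ≠ 1, (f*g*f⁻¹)*g⁻¹ ≺ g (i.e. f*g*f⁻¹ ∼ g); (c) for all f, g ∈ G with f*g ≠ 1, (f*g)*(g*f)⁻¹ ≺ f*g (i.e. f*g ∼ g*f). -/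
/-! The ultrametric inequality D2 makes triangles isosceles: if `a * b⁻¹ ≺ a` or `a * b⁻¹ ≺ b`
then `a ≍ b`, so `a * b⁻¹ ≺ a ↔ a * b⁻¹ ≺ b`. Since `⁅f, g⁆⁻¹ = ⁅g, f⁆` and D4 makes inversion
preserve `≺`, near-Abelianness reduces to `⁅f, g⁆ ≺ g`. Finally
`⁅f, g⁆ = (f⁻¹ * g⁻¹ * f) * (g⁻¹)⁻¹` and `f * g * (g * f)⁻¹ = f * (g * f) * f⁻¹ * (g * f)⁻¹`
turn all three conditions into instances of `h * g * h⁻¹ ∼ g`. -/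

variable {G : Type*} [Group G]

/-- A valued group is nearly Abelian if `⁅f,g⁆ ≺ f` and `⁅f,g⁆ ≺ g` for all
nonidentity `f, g`. -/
def NearlyAbelian (le : G → G → Prop) : Prop :=
  ∀ f g : G, f ≠ 1 → g ≠ 1 →
    vlt le (f⁻¹ * g⁻¹ * f * g) f ∧ vlt le (f⁻¹ * g⁻¹ * f * g) g

namespace IsValuation

variable {le : G → G → Prop} (hv : IsValuation le) {a b x y z : G}
include hv

theorem vlt_of_le_of_vlt_s13 (hxy : le x y) (hyz : vlt le y z) : vlt le x z :=
  ⟨hv.trans _ _ _ hxy hyz.1, fun hzx => hyz.2 (hv.trans _ _ _ hzx hxy)⟩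

theorem vlt_of_vlt_of_le (hxy : vlt le x y) (hyz : le y z) : vlt le x z :=
  ⟨hv.trans _ _ _ hxy.1 hyz, fun hzx => hxy.2 (hv.trans _ _ _ hyz hzx)⟩

theorem vlt_inv_left_iff : vlt le x⁻¹ y ↔ vlt le x y :=
  ⟨hv.vlt_of_le_of_vlt_s13 (hv.d4 x).1, hv.vlt_of_le_of_vlt_s13 (hv.d4 x).2⟩

theorem vlt_inv_right_iff : vlt le x y⁻¹ ↔ vlt le x y :=
  ⟨(hv.vlt_of_vlt_of_le · (hv.d4 y).2), (hv.vlt_of_vlt_of_le · (hv.d4 y).1)⟩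

theorem le_of_vlt_mul_inv_left (h : vlt le (a * b⁻¹) a) : le a b := by
  have hd2 := hv.d2 (a * b⁻¹) b
  rw [inv_mul_cancel_right] at hd2
  exact hd2.resolve_left h.2

theorem le_of_vlt_mul_inv_right (h : vlt le (a * b⁻¹) b) : le b a := by
  have hd2 := hv.d2 (a * b⁻¹)⁻¹ a
  rw [show (a * b⁻¹)⁻¹ * a = b by group] at hd2
  exact hd2.resolve_left fun hb => h.2 (hv.trans _ _ _ hb (hv.d4 _).2)

theorem vlt_mul_inv_left_iff_right : vlt le (a * b⁻¹) a ↔ vlt le (a * b⁻¹) b :=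
  ⟨fun h => hv.vlt_of_vlt_of_le h (hv.le_of_vlt_mul_inv_left h),
   fun h => hv.vlt_of_vlt_of_le h (hv.le_of_vlt_mul_inv_right h)⟩

theorem vlt_commutator_comm {f g : G} :
    vlt le (f⁻¹ * g⁻¹ * f * g) x ↔ vlt le (g⁻¹ * f⁻¹ * g * f) x := by
  rw [← hv.vlt_inv_left_iff]
  simp only [mul_inv_rev, inv_inv, mul_assoc]

theorem nearlyAbelian_iff_forall_commutator_vlt :
    NearlyAbelian le ↔ ∀ f g : G, g ≠ 1 → vlt le (f⁻¹ * g⁻¹ * f * g) g := by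
  refine ⟨fun h f g hg => ?_, fun h f g hf hg => ⟨hv.vlt_commutator_comm.2 (h g f hf), h f g hg⟩⟩
  obtain rfl | hf := eq_or_ne f 1
  · simpa using hv.d1 g hg
  · exact (h f g hf hg).2

theorem nearlyAbelian_iff_forall_conj_mul_inv_vlt :
    NearlyAbelian le ↔ ∀ f g : G, g ≠ 1 → vlt le (f * g * f⁻¹ * g⁻¹) g := by
  rw [hv.nearlyAbelian_iff_forall_commutator_vlt]
  constructor <;> intro h f g hg <;>
    simpa only [inv_inv, hv.vlt_inv_right_iff] using h f⁻¹ g⁻¹ (inv_ne_one.2 hg)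

end IsValuation

/-- Proposition 7.8: the following are equivalent: (a) `G` is nearly Abelian;
(b) `f*g*f⁻¹ ∼ g` for all `f` and all `g ≠ 1`;
(c) `f*g ∼ g*f` for all `f, g` with `f*g ≠ 1`. -/
theorem nearlyAbelian_tfae (le : G → G → Prop) (hv : IsValuation le) :
    [NearlyAbelian le,
     ∀ f g : G, g ≠ 1 → vlt le ((f * g * f⁻¹) * g⁻¹) g,
     ∀ f g : G, f * g ≠ 1 → vlt le ((f * g) * (g * f)⁻¹) (f * g)].TFAE := by
  tfae_have 1 ↔ 2 := hv.nearlyAbelian_iff_forall_conj_mul_inv_vlt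
  tfae_have 2 → 3 := by
    intro h f g hfg
    rw [hv.vlt_mul_inv_left_iff_right]
    simpa only [mul_assoc, mul_inv_cancel_left] using h f (g * f) (mul_eq_one_comm.not.mp hfg)
  tfae_have 3 → 2 := by
    intro h f g hg
    rw [← hv.vlt_mul_inv_left_iff_right]
    simpa only [mul_inv_rev, inv_inv, inv_mul_cancel_left] using
      h (f * g) f⁻¹ (conj_eq_one_iff.not.mpr hg)
  tfae_finish
end

section
/- Let G be a nearly Abelian valued group satisfying axiom (D7): for all f ∈ G and n ∈ ℤ, fⁿ ≠ 1 implies fⁿ ⪯ f. Then G satisfies axiom (D9): for all f, ε ∈ G with f ≠ 1 and ε ≺ f, and all n ∈ ℤ, one has (f*ε)ⁿ*f⁻ⁿ ⪯ ε. -/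
variable {G : Type*} [Group G]

/-!
For a nearly Abelian valuation, conjugating `x` only multiplies it by the commutator
`⁅x, h⁻¹⁆ ≺ x`, so conjugation never increases the valuation. Hence the elements `x ⪯ ε`
form a normal subgroup `N` containing `ε`; modulo `N` the element `f * ε` becomes `f`,
so `(f * ε) ^ n * (f ^ n)⁻¹ ∈ N` for every `n : ℤ`.
-/

namespace IsValuation

variable {le : G → G → Prop}

theorem one_le (hv : IsValuation le) (x : G) : le 1 x := by
  by_cases hx : x = 1
  · exact hx ▸ hv.refl 1
  · exact (hv.d1 x hx).1

theorem mul_le (hv : IsValuation le) {a b c : G} (ha : le a c) (hb : le b c) : le (a * b) c :=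
  (hv.d2 a b).elim (fun h => hv.trans _ _ _ h ha) (fun h => hv.trans _ _ _ h hb)

theorem inv_le (hv : IsValuation le) {a c : G} (ha : le a c) : le a⁻¹ c :=
  hv.trans _ _ _ (hv.d4 a).2 ha

def ball (hv : IsValuation le) (ε : G) : Subgroup G where
  carrier := {x | le x ε}
  one_mem' := hv.one_le ε
  mul_mem' := hv.mul_le
  inv_mem' := hv.inv_le

theorem conj_le_of_nearlyAbelian (hv : IsValuation le) (hna : NearlyAbelian le) (h x : G) :
    le (h * x * h⁻¹) x := by
  by_cases hx : x = 1
  · simpa [hx] using hv.refl 1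
  by_cases hh : h = 1
  · simpa [hh] using hv.refl x
  have hcomm := (hna x h⁻¹ hx (inv_ne_one.mpr hh)).1.1
  have hconj : h * x * h⁻¹ = x * (x⁻¹ * h⁻¹⁻¹ * x * h⁻¹) := by group
  rw [hconj]
  exact hv.mul_le (hv.refl x) hcomm

theorem ball_normal_of_nearlyAbelian (hv : IsValuation le) (hna : NearlyAbelian le) (ε : G) :
    (hv.ball ε).Normal where
  conj_mem x hx h := hv.trans _ _ _ (hv.conj_le_of_nearlyAbelian hna h x) hx

end IsValuation

theorem Subgroup.mul_zpow_mul_inv_zpow_mem {N : Subgroup G} [N.Normal] {ε : G} (hε : ε ∈ N)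
    (f : G) (n : ℤ) : (f * ε) ^ n * (f ^ n)⁻¹ ∈ N := by
  rw [← QuotientGroup.eq_one_iff]
  have hε' : (ε : G ⧸ N) = 1 := (QuotientGroup.eq_one_iff ε).mpr hε
  simp [hε']

theorem d9_of_nearlyAbelian_general (le : G → G → Prop) (hv : IsValuation le)
    (hna : NearlyAbelian le) :
    ∀ f ε : G, f ≠ 1 → vlt le ε f → ∀ n : ℤ,
      le ((f * ε) ^ n * (f ^ n)⁻¹) ε := by
  intro f ε _ _ n
  have := hv.ball_normal_of_nearlyAbelian hna ε
  exact Subgroup.mul_zpow_mul_inv_zpow_mem (N := hv.ball ε) (hv.refl ε) f n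

/-- Proposition 7.10: a nearly Abelian valued group satisfying D7
(`fⁿ ≠ 1 → fⁿ ⪯ f`) satisfies D9: `(f*ε)ⁿ * f⁻ⁿ ⪯ ε` whenever `ε ≺ f ≠ 1`. -/
theorem d9_of_nearlyAbelian (le : G → G → Prop) (hv : IsValuation le)
    (hna : NearlyAbelian le)
    (hd7 : ∀ (f : G) (n : ℤ), f ^ n ≠ 1 → le (f ^ n) f) :
    ∀ f ε : G, f ≠ 1 → vlt le ε f → ∀ n : ℤ,
      le ((f * ε) ^ n * (f ^ n)⁻¹) ε :=
  d9_of_nearlyAbelian_general le hv hna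
end

section
/- Let G be a torsion-free group that is a nearly Abelian valued group satisfying (D7) and (D8), and suppose moreover that G carries a linear order < making it an ordered valued group. Let t ∈ G ∗ ⟨y⟩ be regular, i.e. α(t) ≠ 0. Then the function G → G, f ↦ t(f), is strictly increasing if α(t) > 0, and strictly decreasing if α(t) < 0. -/
variable {G : Type*} [Group G] [LinearOrder G]

/-- Axiom D7 for the `ℤ`-structure: `fⁿ ≠ 1 → fⁿ ⪯ f`. -/
def AxD7 (le : G → G → Prop) : Prop :=
  ∀ (f : G) (n : ℤ), f ^ n ≠ 1 → le (f ^ n) f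

/-- Axiom D8 for the `ℤ`-structure: for nonidentity `f, ε` with `ε ≺ f`,
`(f*ε)ⁿ * f⁻ⁿ ≺ f`. -/
def AxD8 (le : G → G → Prop) : Prop :=
  ∀ f ε : G, f ≠ 1 → ε ≠ 1 → vlt le ε f → ∀ n : ℤ,
    vlt le ((f * ε) ^ n * (f ^ n)⁻¹) f

/-- The free product `G ∗ ⟨y⟩` of `G` with the free group on one generator. -/
abbrev FP (G : Type*) [Group G] : Type _ := Monoid.Coprod G (FreeGroup Unit)

/-- Evaluation at `f ∈ G`: the unique homomorphism `G ∗ ⟨y⟩ → G` restricting to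
the identity on `G` and sending `y` to `f`. We write `t(f)` for `ev f t`. -/
noncomputable def ev (f : G) : FP G →* G :=
  Monoid.Coprod.lift (MonoidHom.id G) (FreeGroup.lift fun _ => f)

/-- The homomorphism `α : G ∗ ⟨y⟩ → ℤ`, trivial on `G` and sending `y` to `1`. -/
noncomputable def alpha (t : FP G) : ℤ :=
  Multiplicative.toAdd
    (Monoid.Coprod.lift (1 : G →* Multiplicative ℤ)
      (FreeGroup.lift fun _ => Multiplicative.ofAdd (1 : ℤ)) t)

/-- `Monoid.IsTorsionFree` as defined in the older Mathlib (removed since). -/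
def Monoid.IsTorsionFree (G : Type*) [Monoid G] : Prop :=
  ∀ g : G, g ≠ 1 → ¬IsOfFinOrder g

section Aux

variable {le : G → G → Prop}
set_option linter.unusedSectionVars false

/-- `ε` is small relative to `δ` : either trivial or `ε ≺ δ`. -/
def VSmall (le : G → G → Prop) (δ ε : G) : Prop := ε = 1 ∨ vlt le ε δ

theorem VAux.vlt_of_vlt_of_le (hv : IsValuation le) {a b c : G}
    (h1 : vlt le a b) (h2 : le b c) : vlt le a c :=
  ⟨hv.trans _ _ _ h1.1 h2, fun hca => h1.2 (hv.trans _ _ _ h2 hca)⟩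

theorem VAux.vlt_of_le_of_vlt (hv : IsValuation le) {a b c : G}
    (h1 : le a b) (h2 : vlt le b c) : vlt le a c :=
  ⟨hv.trans _ _ _ h1 h2.1, fun hca => h2.2 (hv.trans _ _ _ hca h1)⟩

theorem VAux.small_mul (hv : IsValuation le) {δ a b : G}
    (ha : VSmall le δ a) (hb : VSmall le δ b) : VSmall le δ (a * b) := by
  rcases ha with rfl | ha
  · simpa using hb
  rcases hb with rfl | hb
  · rw [mul_one]; exact Or.inr ha
  rcases hv.d2 a b with h | h
  · exact Or.inr (VAux.vlt_of_le_of_vlt hv h ha)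
  · exact Or.inr (VAux.vlt_of_le_of_vlt hv h hb)

theorem VAux.small_inv' (hv : IsValuation le) {δ a : G}
    (ha : VSmall le δ a) : VSmall le δ a⁻¹ := by
  rcases ha with rfl | ha
  · exact Or.inl inv_one
  · exact Or.inr (VAux.vlt_of_le_of_vlt hv (hv.d4 a).2 ha)

theorem VAux.small_conj (hv : IsValuation le) (hna : NearlyAbelian le) {δ ε : G}
    (hε : VSmall le δ ε) (h : G) : VSmall le δ (h * ε * h⁻¹) := by
  rcases hε with rfl | hε
  · exact Or.inl (by simp)
  by_cases hh : h = 1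
  · subst hh; simp only [one_mul, inv_one, mul_one]; exact Or.inr hε
  by_cases hε1 : ε = 1
  · subst hε1; exact Or.inl (by simp)
  have hkey : h * ε * h⁻¹ = ε * (ε⁻¹ * h * ε * h⁻¹) := by group
  have hc : vlt le (ε⁻¹ * h * ε * h⁻¹) ε := by
    have := (hna ε h⁻¹ hε1 (inv_ne_one.mpr hh)).1
    simpa using this
  rw [hkey]
  exact VAux.small_mul hv (Or.inr hε)
    (Or.inr (VAux.vlt_of_vlt_of_le hv hc hε.1))

theorem VAux.comm_small (hv : IsValuation le) (hna : NearlyAbelian le) {δ x : G}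
    (hx : x = 1 ∨ veq le x δ) (h : G) : VSmall le δ (x⁻¹ * h⁻¹ * x * h) := by
  rcases hx with rfl | hx
  · exact Or.inl (by group)
  by_cases hx1 : x = 1
  · subst hx1; exact Or.inl (by group)
  by_cases hh : h = 1
  · subst hh; exact Or.inl (by group)
  exact Or.inr (VAux.vlt_of_vlt_of_le hv ((hna x h hx1 hh).1) hx.1)

theorem VAux.mul_le_left (hv : IsOrderedValuation le) {a b : G} (c : G)
    (h : a ≤ b) : c * a ≤ c * b := by
  rcases h.lt_or_eq with h | rfl
  · exact (hv.mul_lt_mul_left c a b h).le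
  · exact le_rfl

theorem VAux.mul_le_right (hv : IsOrderedValuation le) {a b : G} (c : G)
    (h : a ≤ b) : a * c ≤ b * c := by
  rcases h.lt_or_eq with h | rfl
  · exact (hv.mul_lt_mul_right c a b h).le
  · exact le_rfl

theorem VAux.one_le_zpow (hv : IsOrderedValuation le) {δ : G} (hδ : 1 < δ) :
    ∀ n : ℤ, 0 ≤ n → 1 ≤ δ ^ n := by
  refine fun n => Int.le_induction (motive := fun m _ => (1 : G) ≤ δ ^ m) (le_of_eq (zpow_zero δ).symm) ?_ n
  intro n _hn ih
  have h1 : δ ^ (n + 1) = δ ^ n * δ := by rw [zpow_add_one]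
  rw [h1]
  calc (1 : G) ≤ δ := hδ.le
  _ = 1 * δ := (one_mul δ).symm
  _ ≤ δ ^ n * δ := VAux.mul_le_right hv δ ih

theorem VAux.le_zpow (hv : IsOrderedValuation le) {δ : G} (hδ : 1 < δ)
    {n : ℤ} (hn : 1 ≤ n) : δ ≤ δ ^ n := by
  have h1 : δ ^ n = δ * δ ^ (n - 1) := by
    rw [← zpow_one_add]; ring_nf
  rw [h1]
  calc δ = δ * 1 := (mul_one δ).symm
  _ ≤ δ * δ ^ (n - 1) := VAux.mul_le_left hv δ (VAux.one_le_zpow hv hδ _ (by omega))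

theorem VAux.one_lt_zpow (hv : IsOrderedValuation le) {δ : G} (hδ : 1 < δ)
    {n : ℤ} (hn : 1 ≤ n) : 1 < δ ^ n :=
  lt_of_lt_of_le hδ (VAux.le_zpow hv hδ hn)

theorem VAux.zpow_ne_one (htf : Monoid.IsTorsionFree G) {δ : G} (hδ : δ ≠ 1)
    {n : ℤ} (hn : n ≠ 0) : δ ^ n ≠ 1 := fun h =>
  htf δ hδ (isOfFinOrder_iff_zpow_eq_one.mpr ⟨n, hn, h⟩)

theorem VAux.veq_zpow (hv : IsOrderedValuation le) (htf : Monoid.IsTorsionFree G)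
    (hd7 : AxD7 le) {δ : G} (hδ : 1 < δ) {n : ℤ} (hn : n ≠ 0) :
    veq le (δ ^ n) δ := by
  constructor
  · exact hd7 δ n (VAux.zpow_ne_one htf hδ.ne' hn)
  · rcases lt_or_gt_of_ne hn with h | h
    · have h1 : le δ (δ ^ (-n)) :=
        hv.le_of_lt_of_le δ (δ ^ (-n)) hδ (VAux.le_zpow hv hδ (by omega))
      have h2 := (hv.d4 (δ ^ (-n))).1
      rw [zpow_neg] at h2 h1
      rw [inv_inv] at h2
      exact hv.trans _ _ _ h1 h2
    · exact hv.le_of_lt_of_le δ (δ ^ n) hδ (VAux.le_zpow hv hδ (by omega))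

theorem VAux.lt_of_small (hv : IsOrderedValuation le) {x h : G}
    (hh : 1 < h) (hx : vlt le x h) : x < h ∧ h⁻¹ < x := by
  constructor
  · by_contra hc
    push_neg at hc
    exact hx.2 (hv.le_of_lt_of_le h x hh hc)
  · by_contra hc
    push_neg at hc
    have h1 : h ≤ x⁻¹ := by
      have h2 : x⁻¹ * x ≤ x⁻¹ * h⁻¹ := VAux.mul_le_left hv x⁻¹ hc
      rw [inv_mul_cancel] at h2
      have h3 : 1 * h ≤ x⁻¹ * h⁻¹ * h := VAux.mul_le_right hv h h2
      rwa [one_mul, mul_assoc, inv_mul_cancel, mul_one] at h3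
    have h4 : le h x⁻¹ := hv.le_of_lt_of_le h x⁻¹ hh h1
    exact hx.2 (hv.trans _ _ _ h4 (hv.d4 x).2)

theorem VAux.alpha_mul (s u : FP G) : alpha (s * u) = alpha s + alpha u := by
  simp [alpha, map_mul]

theorem VAux.alpha_inv (s : FP G) : alpha s⁻¹ = -alpha s := by
  simp [alpha, map_inv]

theorem VAux.alpha_inl (a : G) : alpha (Monoid.Coprod.inl a : FP G) = 0 := by
  simp [alpha, Monoid.Coprod.lift_apply_inl]

theorem VAux.alpha_one : alpha (1 : FP G) = 0 := by
  simp [alpha]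

theorem VAux.alpha_inr_of : alpha (Monoid.Coprod.inr (FreeGroup.of ()) : FP G) = 1 := by
  simp [alpha, Monoid.Coprod.lift_apply_inr, FreeGroup.lift_apply_of]

theorem VAux.ev_inl (f a : G) : ev f (Monoid.Coprod.inl a : FP G) = a := by
  simp [ev, Monoid.Coprod.lift_apply_inl]

theorem VAux.ev_inr_of (f : G) : ev f (Monoid.Coprod.inr (FreeGroup.of ()) : FP G) = f := by
  simp [ev, Monoid.Coprod.lift_apply_inr, FreeGroup.lift_apply_of]

/-- The key cocycle lemma: `t(δ·f) = δ^(α t) · ε · t(f)` with `ε` small. -/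
theorem VAux.key (hv : IsOrderedValuation le) (hna : NearlyAbelian le)
    (htf : Monoid.IsTorsionFree G) (hd7 : AxD7 le)
    (f δ : G) (hδ : 1 < δ) (t : FP G) :
    ∃ ε : G, ev (δ * f) t = δ ^ alpha t * ε * ev f t ∧ VSmall le δ ε := by
  have hzp : ∀ m : ℤ, (δ ^ m = 1 ∨ veq le (δ ^ m) δ) := by
    intro m
    by_cases hm : m = 0
    · subst hm; exact Or.inl (zpow_zero δ)
    · exact Or.inr (VAux.veq_zpow hv htf hd7 hδ hm)
  -- closure under multiplication
  have hmul : ∀ s u : FP G,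
      (∃ ε : G, ev (δ * f) s = δ ^ alpha s * ε * ev f s ∧ VSmall le δ ε) →
      (∃ ε : G, ev (δ * f) u = δ ^ alpha u * ε * ev f u ∧ VSmall le δ ε) →
      (∃ ε : G, ev (δ * f) (s * u) = δ ^ alpha (s * u) * ε * ev f (s * u) ∧
        VSmall le δ ε) := by
    rintro s u ⟨εs, hs, hεs⟩ ⟨εu, hu, hεu⟩
    set a := alpha s with ha
    set b := alpha u with hb
    set P := ev f s with hP
    set Q := ev f u with hQ
    refine ⟨(δ ^ (-b) * εs * (δ ^ (-b))⁻¹) * ((δ ^ b)⁻¹ * (P⁻¹)⁻¹ * δ ^ b * P⁻¹) *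
      (P * εu * P⁻¹), ?_, ?_⟩
    · rw [map_mul, map_mul, hs, hu, VAux.alpha_mul, ← ha, ← hb, ← hP, ← hQ]
      rw [zpow_add, zpow_neg]
      group
    · exact VAux.small_mul hv.toIsValuation
        (VAux.small_mul hv.toIsValuation
          (VAux.small_conj hv.toIsValuation hna hεs _)
          (VAux.comm_small hv.toIsValuation hna (hzp b) _))
        (VAux.small_conj hv.toIsValuation hna hεu _)
  -- closure under inverse
  have hinv : ∀ s : FP G,
      (∃ ε : G, ev (δ * f) s = δ ^ alpha s * ε * ev f s ∧ VSmall le δ ε) →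
      (∃ ε : G, ev (δ * f) s⁻¹ = δ ^ alpha s⁻¹ * ε * ev f s⁻¹ ∧ VSmall le δ ε) := by
    rintro s ⟨ε, hs, hε⟩
    set a := alpha s with ha
    set P := ev f s with hP
    refine ⟨((δ ^ (-a))⁻¹ * P⁻¹ * δ ^ (-a) * P) *
      (P⁻¹ * (δ ^ a * ε⁻¹ * (δ ^ a)⁻¹) * (P⁻¹)⁻¹), ?_, ?_⟩
    · rw [map_inv, map_inv, hs, VAux.alpha_inv, ← ha, ← hP]
      rw [zpow_neg]
      group
    · exact VAux.small_mul hv.toIsValuation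
        (VAux.comm_small hv.toIsValuation hna (hzp (-a)) _)
        (VAux.small_conj hv.toIsValuation hna
          (VAux.small_conj hv.toIsValuation hna
            (VAux.small_inv' hv.toIsValuation hε) _) _)
  induction t using Monoid.Coprod.induction_on with
  | inl a =>
    exact ⟨1, by rw [VAux.ev_inl, VAux.ev_inl, VAux.alpha_inl]; group, Or.inl rfl⟩
  | inr w =>
    induction w using FreeGroup.induction_on with
    | C1 =>
      refine ⟨1, ?_, Or.inl rfl⟩
      rw [map_one]
      rw [map_one, map_one, VAux.alpha_one]
      group
    | of x =>
      obtain ⟨⟩ := x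
      refine ⟨1, ?_, Or.inl rfl⟩
      have h1 : (FreeGroup.of () : FreeGroup Unit) = pure () := rfl
      rw [VAux.ev_inr_of, VAux.ev_inr_of, VAux.alpha_inr_of]
      group
    | inv_of x ih =>
      have h2 : (Monoid.Coprod.inr ((FreeGroup.of x : FreeGroup Unit)⁻¹) : FP G) =
          (Monoid.Coprod.inr (FreeGroup.of x : FreeGroup Unit) : FP G)⁻¹ := by
        rw [map_inv]
      rw [h2]
      exact hinv _ ih
    | mul x y ihx ihy =>
      have h3 : (Monoid.Coprod.inr (x * y) : FP G) =
          Monoid.Coprod.inr x * Monoid.Coprod.inr y := by rw [map_mul]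
      rw [h3]
      exact hmul _ _ ihx ihy
  | mul s u ihs ihu => exact hmul s u ihs ihu

end Aux

/-- Theorem 8.9: over a torsion-free nearly Abelian ordered valued group
satisfying D7 and D8, for regular `t ∈ G ∗ ⟨y⟩` the map `f ↦ t(f)` is strictly
increasing if `α(t) > 0` and strictly decreasing if `α(t) < 0`. -/
theorem eval_strictMono (le : G → G → Prop) (htf : Monoid.IsTorsionFree G)
    (hv : IsOrderedValuation le) (hna : NearlyAbelian le)
    (hd7 : AxD7 le) (hd8 : AxD8 le)
    (t : FP G) (hreg : alpha t ≠ 0) :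
    (0 < alpha t → StrictMono fun f : G => ev f t) ∧
    (alpha t < 0 → StrictAnti fun f : G => ev f t) := by
  set n := alpha t with hn
  have main : ∀ f g : G, f < g →
      ∃ ε : G, ev g t = (g * f⁻¹) ^ n * ε * ev f t ∧
        VSmall le (g * f⁻¹) ε ∧ 1 < g * f⁻¹ := by
    intro f g hfg
    have hδ : 1 < g * f⁻¹ := by
      have := hv.mul_lt_mul_right f⁻¹ f g hfg
      rwa [mul_inv_cancel] at this
    obtain ⟨ε, hε, hsm⟩ := VAux.key hv hna htf hd7 f (g * f⁻¹) hδ t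
    rw [inv_mul_cancel_right] at hε
    exact ⟨ε, hε, hsm, hδ⟩
  constructor
  · intro hpos f g hfg
    obtain ⟨ε, hε, hsm, hδ⟩ := main f g hfg
    set δ := g * f⁻¹
    have hone : 1 < δ ^ n * ε := by
      rcases hsm with rfl | hsm
      · rw [mul_one]
        exact VAux.one_lt_zpow hv hδ (by omega)
      · have hδn : 1 < δ ^ n := VAux.one_lt_zpow hv hδ (by omega)
        have hεδn : vlt le ε (δ ^ n) :=
          VAux.vlt_of_vlt_of_le hv.toIsValuation hsm
            (VAux.veq_zpow hv htf hd7 hδ (by omega)).2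
        have h1 : (δ ^ n)⁻¹ < ε := (VAux.lt_of_small hv hδn hεδn).2
        have h2 := hv.mul_lt_mul_left (δ ^ n) _ _ h1
        rwa [mul_inv_cancel] at h2
    show ev f t < ev g t
    have h3 := hv.mul_lt_mul_right (ev f t) 1 (δ ^ n * ε) hone
    rw [one_mul] at h3
    rwa [hε]
  · intro hneg f g hfg
    obtain ⟨ε, hε, hsm, hδ⟩ := main f g hfg
    set δ := g * f⁻¹
    have hone : δ ^ n * ε < 1 := by
      have hδn : 1 < δ ^ (-n) := VAux.one_lt_zpow hv hδ (by omega)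
      rcases hsm with rfl | hsm
      · rw [mul_one]
        have h2 := hv.mul_lt_mul_left (δ ^ n) 1 (δ ^ (-n)) hδn
        rwa [mul_one, ← zpow_add, add_neg_cancel, zpow_zero] at h2
      · have hεδn : vlt le ε (δ ^ (-n)) :=
          VAux.vlt_of_vlt_of_le hv.toIsValuation hsm
            (VAux.veq_zpow hv htf hd7 hδ (by omega)).2
        have h1 : ε < δ ^ (-n) := (VAux.lt_of_small hv hδn hεδn).1
        have h2 := hv.mul_lt_mul_left (δ ^ n) _ _ h1
        rwa [← zpow_add, add_neg_cancel, zpow_zero] at h2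
    show ev g t < ev f t
    have h3 := hv.mul_lt_mul_right (ev f t) (δ ^ n * ε) 1 hone
    rw [one_mul] at h3
    rwa [hε]
end
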